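/- Let r ∈ (2,3] and let S, M, R be real random variables in L^r on a common probability space with S = M + R, E(S²) = E(M²) (after rescaling), E(R) = 0. Let g be twice differentiable with g'(0)=g''(0)=0 and g'' being (r−2)-Hölder with constant 1. Then E(g(S) − g(M)) ≤ (1/(r−1)) ‖R‖_r ‖M‖_r^{r−1} + (1/2) ‖R‖_r² ‖M‖_r^{r−2} + ‖R‖_r^r. -/

import Mathlib

open MeasureTheory

/-!
Expand `g` to second order at `M`. Since `g''` vanishes at `0` and is `(r - 2)`-Hölder,
`|g''(a)| ≤ |a| ^ (r - 2)`. A single comparison estimate,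
`|u x - u a| ≤ C |x - a| ^ (s + 1) / (s + 1)` whenever `|u'| ≤ C |· - a| ^ s`, then climbs one
derivative at a time: it gives `|g'(a)| ≤ |a| ^ (r - 1) / (r - 1)`, then
`|g'(x) - g'(a) - (x - a) g''(a)| ≤ |x - a| ^ (r - 1) / (r - 1)`, and finally a second-order
remainder of at most `|b| ^ r / (r (r - 1)) ≤ |b| ^ r`. This bounds `|g (M + R) - g M|` pointwise
by `|R| |M| ^ (r - 1) / (r - 1) + R ^ 2 |M| ^ (r - 2) / 2 + |R| ^ r`, whose integral is controlled
by Hölder's inequality with the exponent pairs `(r, r / (r - 1))` and `(r / 2, r / (r - 2))`.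
-/

theorem abs_sub_le_mul_rpow_div_of_abs_deriv_le_of_le {u u' : ℝ → ℝ} {a C s : ℝ}
    (hs : 0 ≤ s) (hu : ∀ x, HasDerivAt u (u' x) x) (hbd : ∀ x, |u' x| ≤ C * |x - a| ^ s)
    {x : ℝ} (hx : a ≤ x) : |u x - u a| ≤ C * (x - a) ^ (s + 1) / (s + 1) := by
  have hB (y : ℝ) :
      HasDerivAt (fun y => C * (y - a) ^ (s + 1) / (s + 1)) (C * (y - a) ^ s) y := by
    have := ((hasDerivAt_id' y).sub_const a).rpow_const (p := s + 1) (Or.inr (by linarith))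
    refine ((this.const_mul C).div_const (s + 1)).congr_deriv ?_
    rw [add_sub_cancel_right]
    field_simp
  refine image_norm_le_of_norm_deriv_right_le_deriv_boundary (f := fun y => u y - u a)
    (fun y _ => ((hu y).sub_const _).continuousAt.continuousWithinAt)
    (fun y _ => ((hu y).sub_const _).hasDerivWithinAt)
    (by simp [Real.zero_rpow (by linarith : s + 1 ≠ 0)]) hB (fun y hy => ?_) ⟨hx, le_rfl⟩
  simpa [abs_of_nonneg (sub_nonneg.2 hy.1)] using hbd y

theorem abs_sub_le_mul_rpow_div_of_abs_deriv_le {u u' : ℝ → ℝ} {a C s : ℝ} (hs : 0 ≤ s)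
    (hu : ∀ x, HasDerivAt u (u' x) x) (hbd : ∀ x, |u' x| ≤ C * |x - a| ^ s) (x : ℝ) :
    |u x - u a| ≤ C * |x - a| ^ (s + 1) / (s + 1) := by
  rcases le_total a x with hx | hx
  · rw [abs_of_nonneg (sub_nonneg.2 hx)]
    exact abs_sub_le_mul_rpow_div_of_abs_deriv_le_of_le hs hu hbd hx
  · have hv (y : ℝ) : HasDerivAt (fun y => u (-y)) (-u' (-y)) y :=
      ((hu (-y)).comp y (hasDerivAt_neg y)).congr_deriv (by ring)
    have := abs_sub_le_mul_rpow_div_of_abs_deriv_le_of_le (a := -a) (C := C) hs hv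
      (fun y => by simpa [neg_sub_neg, abs_sub_comm, add_comm] using hbd (-y)) (neg_le_neg hx)
    rw [neg_neg, neg_neg, neg_sub_neg] at this
    rwa [abs_of_nonpos (sub_nonpos.2 hx), neg_sub]

noncomputable def taylorMajorant (r a b : ℝ) : ℝ :=
  1 / (r - 1) * (|b| * |a| ^ (r - 1)) + 1 / 2 * (b ^ 2 * |a| ^ (r - 2)) + |b| ^ r

section HolderSecondDerivative

variable {g : ℝ → ℝ} {r : ℝ}

theorem abs_deriv_deriv_le_of_holder (h0' : deriv (deriv g) 0 = 0)
    (hHolder : ∀ x y : ℝ, |deriv (deriv g) x - deriv (deriv g) y| ≤ |x - y| ^ (r - 2))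
    (x : ℝ) : |deriv (deriv g) x| ≤ |x| ^ (r - 2) := by
  simpa [h0'] using hHolder x 0

theorem abs_deriv_le_of_holder (hr : 2 ≤ r) (hg' : Differentiable ℝ (deriv g))
    (h0 : deriv g 0 = 0) (h0' : deriv (deriv g) 0 = 0)
    (hHolder : ∀ x y : ℝ, |deriv (deriv g) x - deriv (deriv g) y| ≤ |x - y| ^ (r - 2))
    (x : ℝ) : |deriv g x| ≤ |x| ^ (r - 1) / (r - 1) := by
  have := abs_sub_le_mul_rpow_div_of_abs_deriv_le (a := 0) (C := 1) (sub_nonneg.2 hr)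
    (fun y => (hg' y).hasDerivAt)
    (fun y => by simpa using abs_deriv_deriv_le_of_holder h0' hHolder y) x
  simpa [h0, show r - 2 + 1 = r - 1 by ring] using this

theorem abs_deriv_sub_taylor_le_of_holder (hr : 2 ≤ r) (hg' : Differentiable ℝ (deriv g))
    (hHolder : ∀ x y : ℝ, |deriv (deriv g) x - deriv (deriv g) y| ≤ |x - y| ^ (r - 2))
    (a x : ℝ) :
    |deriv g x - deriv g a - (x - a) * deriv (deriv g) a| ≤ |x - a| ^ (r - 1) / (r - 1) := by
  have hu (y : ℝ) : HasDerivAt (fun y => deriv g y - (y - a) * deriv (deriv g) a)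
      (deriv (deriv g) y - deriv (deriv g) a) y :=
    ((hg' y).hasDerivAt.sub (((hasDerivAt_id' y).sub_const a).mul_const _)).congr_deriv (by ring)
  have := abs_sub_le_mul_rpow_div_of_abs_deriv_le (C := 1) (sub_nonneg.2 hr) hu
    (fun y => by simpa using hHolder y a) x
  simpa [show r - 2 + 1 = r - 1 by ring, sub_right_comm] using this

theorem abs_sub_taylor_le_of_holder (hr : 2 ≤ r) (hg : Differentiable ℝ g)
    (hg' : Differentiable ℝ (deriv g))
    (hHolder : ∀ x y : ℝ, |deriv (deriv g) x - deriv (deriv g) y| ≤ |x - y| ^ (r - 2))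
    (a b : ℝ) :
    |g (a + b) - g a - b * deriv g a - b ^ 2 / 2 * deriv (deriv g) a|
      ≤ 1 / (r - 1) * |b| ^ r / r := by
  have hu (y : ℝ) : HasDerivAt
      (fun y => g y - (y - a) * deriv g a - (y - a) ^ 2 / 2 * deriv (deriv g) a)
      (deriv g y - deriv g a - (y - a) * deriv (deriv g) a) y := by
    have hlin := ((hasDerivAt_id' y).sub_const a)
    refine (((hg y).hasDerivAt.sub (hlin.mul_const _)).sub
      (((hlin.pow 2).div_const 2).mul_const _)).congr_deriv ?_
    simp
  have := abs_sub_le_mul_rpow_div_of_abs_deriv_le (C := 1 / (r - 1)) (s := r - 1) (by linarith) hu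
    (fun y => by simpa [div_eq_inv_mul] using abs_deriv_sub_taylor_le_of_holder hr hg' hHolder a y)
    (a + b)
  rw [show r - 1 + 1 = r by ring] at this
  convert this using 2
  · ring
  · rw [add_sub_cancel_left]

theorem abs_sub_le_taylorMajorant_of_holder (hr : 2 ≤ r) (hg : Differentiable ℝ g)
    (hg' : Differentiable ℝ (deriv g)) (h0 : deriv g 0 = 0) (h0' : deriv (deriv g) 0 = 0)
    (hHolder : ∀ x y : ℝ, |deriv (deriv g) x - deriv (deriv g) y| ≤ |x - y| ^ (r - 2))
    (a b : ℝ) :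
    |g (a + b) - g a| ≤ taylorMajorant r a b := by
  have hr1 : 0 < r - 1 := by linarith
  have hrem : 1 / (r - 1) * |b| ^ r / r ≤ |b| ^ r := by
    rw [div_mul_eq_mul_div, one_mul, div_div, div_le_iff₀ (by positivity)]
    exact le_mul_of_one_le_right (by positivity) (by nlinarith)
  have hfirst : |b * deriv g a| ≤ 1 / (r - 1) * (|b| * |a| ^ (r - 1)) := by
    rw [abs_mul]
    calc |b| * |deriv g a| ≤ |b| * (|a| ^ (r - 1) / (r - 1)) := by
          gcongr; exact abs_deriv_le_of_holder hr hg' h0 h0' hHolder a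
      _ = _ := by ring
  have hsecond : |b ^ 2 / 2 * deriv (deriv g) a| ≤ 1 / 2 * (b ^ 2 * |a| ^ (r - 2)) := by
    rw [abs_mul, abs_of_nonneg (by positivity : 0 ≤ b ^ 2 / 2)]
    calc b ^ 2 / 2 * |deriv (deriv g) a| ≤ b ^ 2 / 2 * |a| ^ (r - 2) := by
          gcongr; exact abs_deriv_deriv_le_of_holder h0' hHolder a
      _ = _ := by ring
  calc |g (a + b) - g a|
      = |(g (a + b) - g a - b * deriv g a - b ^ 2 / 2 * deriv (deriv g) a)
          + b * deriv g a + b ^ 2 / 2 * deriv (deriv g) a| := by congr 1; ring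
    _ ≤ |g (a + b) - g a - b * deriv g a - b ^ 2 / 2 * deriv (deriv g) a|
          + |b * deriv g a| + |b ^ 2 / 2 * deriv (deriv g) a| := abs_add_three _ _ _
    _ ≤ taylorMajorant r a b := by
      unfold taylorMajorant
      linarith [abs_sub_taylor_le_of_holder hr hg hg' hHolder a b]

end HolderSecondDerivative

namespace MeasureTheory

variable {Ω : Type*} [MeasurableSpace Ω] {μ : Measure Ω} {f h : Ω → ℝ} {p a b : ℝ}

theorem eLpNorm_one_abs_rpow_mul_abs_rpow_le (hf : AEStronglyMeasurable f μ)
    (hh : AEStronglyMeasurable h μ) (ha : 0 < a) (hb : 0 < b) (hab : a + b = p) :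
    eLpNorm (fun ω => |f ω| ^ a * |h ω| ^ b) 1 μ
      ≤ eLpNorm f (.ofReal p) μ ^ a * eLpNorm h (.ofReal p) μ ^ b := by
  have hp : 0 < p := by linarith
  have : ENNReal.HolderTriple (.ofReal (p / a)) (.ofReal (p / b)) 1 := by
    rw [ENNReal.holderTriple_iff, ← ENNReal.ofReal_inv_of_pos (by positivity),
      ← ENNReal.ofReal_inv_of_pos (by positivity),
      ← ENNReal.ofReal_add (by positivity) (by positivity), inv_div, inv_div, ← add_div, hab,
      div_self hp.ne']
    simp
  have key := eLpNorm_le_eLpNorm_mul_eLpNorm'_of_norm (p := .ofReal (p / a))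
    (q := .ofReal (p / b)) (r := 1) (hf.aemeasurable.norm.pow_const a).aestronglyMeasurable
    (hh.aemeasurable.norm.pow_const b).aestronglyMeasurable (· * ·) 1
    (ae_of_all _ fun ω => by simp)
  rw [eLpNorm_norm_rpow _ ha, eLpNorm_norm_rpow _ hb, ← ENNReal.ofReal_mul (by positivity),
    ← ENNReal.ofReal_mul (by positivity), div_mul_cancel₀ _ ha.ne',
    div_mul_cancel₀ _ hb.ne'] at key
  simpa using key

theorem integral_eq_toReal_eLpNorm_one_of_nonneg (h0 : 0 ≤ h) (hh : AEStronglyMeasurable h μ) :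
    ∫ ω, h ω ∂μ = (eLpNorm h 1 μ).toReal := by
  rw [eLpNorm_one_eq_lintegral_enorm, ← integral_norm_eq_lintegral_enorm hh]
  simp [abs_of_nonneg (h0 _)]


theorem MemLp.integrable_abs_rpow_mul_abs_rpow (hf : MemLp f (.ofReal p) μ)
    (hh : MemLp h (.ofReal p) μ) (ha : 0 < a) (hb : 0 < b) (hab : a + b = p) :
    Integrable (fun ω => |f ω| ^ a * |h ω| ^ b) μ := by
  refine memLp_one_iff_integrable.1 ⟨?_, ?_⟩
  · exact ((hf.1.aemeasurable.norm.pow_const a).mul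
      (hh.1.aemeasurable.norm.pow_const b)).aestronglyMeasurable
  · refine (eLpNorm_one_abs_rpow_mul_abs_rpow_le hf.1 hh.1 ha hb hab).trans_lt ?_
    exact ENNReal.mul_lt_top (ENNReal.rpow_lt_top_of_nonneg ha.le hf.eLpNorm_ne_top)
      (ENNReal.rpow_lt_top_of_nonneg hb.le hh.eLpNorm_ne_top)

theorem MemLp.integral_abs_rpow_mul_abs_rpow_le (hf : MemLp f (.ofReal p) μ)
    (hh : MemLp h (.ofReal p) μ) (ha : 0 < a) (hb : 0 < b) (hab : a + b = p) :
    ∫ ω, |f ω| ^ a * |h ω| ^ b ∂μ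
      ≤ (eLpNorm f (.ofReal p) μ).toReal ^ a * (eLpNorm h (.ofReal p) μ).toReal ^ b := by
  rw [integral_eq_toReal_eLpNorm_one_of_nonneg (fun ω => by positivity)
    (hf.integrable_abs_rpow_mul_abs_rpow hh ha hb hab).1, ENNReal.toReal_rpow,
    ENNReal.toReal_rpow, ← ENNReal.toReal_mul]
  exact ENNReal.toReal_mono
    (ENNReal.mul_ne_top (ENNReal.rpow_ne_top_of_nonneg ha.le hf.eLpNorm_ne_top)
      (ENNReal.rpow_ne_top_of_nonneg hb.le hh.eLpNorm_ne_top))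
    (eLpNorm_one_abs_rpow_mul_abs_rpow_le hf.1 hh.1 ha hb hab)

theorem MemLp.integrable_abs_rpow (hf : MemLp f (.ofReal p) μ) (hp : 0 < p) :
    Integrable (fun ω => |f ω| ^ p) μ := by
  simpa [ENNReal.toReal_ofReal hp.le] using
    hf.integrable_norm_rpow (by simpa using hp) ENNReal.ofReal_ne_top

theorem MemLp.integral_abs_rpow_eq (hf : MemLp f (.ofReal p) μ) (hp : 0 < p) :
    ∫ ω, |f ω| ^ p ∂μ = (eLpNorm f (.ofReal p) μ).toReal ^ p := by
  rw [integral_eq_toReal_eLpNorm_one_of_nonneg (h := fun ω => |f ω| ^ p) (fun ω => by positivity)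
    (by simpa using (hf.1.aemeasurable.norm.pow_const p).aestronglyMeasurable),
    ENNReal.toReal_rpow]
  simpa using congrArg ENNReal.toReal (eLpNorm_norm_rpow (p := 1) (μ := μ) f hp)

variable {r : ℝ} {M R : Ω → ℝ}

theorem integrable_taylorMajorant (hr : 2 < r) (hM : MemLp M (.ofReal r) μ)
    (hR : MemLp R (.ofReal r) μ) : Integrable (fun ω => taylorMajorant r (M ω) (R ω)) μ := by
  have h₁ := hR.integrable_abs_rpow_mul_abs_rpow hM one_pos (by linarith) (add_sub_cancel 1 r)
  have h₂ := hR.integrable_abs_rpow_mul_abs_rpow hM two_pos (by linarith) (add_sub_cancel 2 r)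
  simp only [Real.rpow_one, Real.rpow_two, sq_abs] at h₁ h₂
  exact ((h₁.const_mul _).add (h₂.const_mul _)).add (hR.integrable_abs_rpow (by linarith))

theorem integral_taylorMajorant_le (hr : 2 < r) (hM : MemLp M (.ofReal r) μ)
    (hR : MemLp R (.ofReal r) μ) :
    ∫ ω, taylorMajorant r (M ω) (R ω) ∂μ
      ≤ 1 / (r - 1) * (eLpNorm R (.ofReal r) μ).toReal
            * (eLpNorm M (.ofReal r) μ).toReal ^ (r - 1)
        + 1 / 2 * (eLpNorm R (.ofReal r) μ).toReal ^ 2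
            * (eLpNorm M (.ofReal r) μ).toReal ^ (r - 2)
        + (eLpNorm R (.ofReal r) μ).toReal ^ r := by
  have hr1 : 0 < r - 1 := by linarith
  have hr2 : 0 < r - 2 := by linarith
  have h₁ := hR.integrable_abs_rpow_mul_abs_rpow hM one_pos hr1 (add_sub_cancel 1 r)
  have h₂ := hR.integrable_abs_rpow_mul_abs_rpow hM two_pos hr2 (add_sub_cancel 2 r)
  have b₁ := hR.integral_abs_rpow_mul_abs_rpow_le hM one_pos hr1 (add_sub_cancel 1 r)
  have b₂ := hR.integral_abs_rpow_mul_abs_rpow_le hM two_pos hr2 (add_sub_cancel 2 r)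
  simp only [Real.rpow_one, Real.rpow_two, sq_abs] at h₁ h₂ b₁ b₂
  unfold taylorMajorant
  rw [integral_add ?_ (hR.integrable_abs_rpow (by linarith)),
    integral_add (h₁.const_mul _) (h₂.const_mul _), integral_const_mul, integral_const_mul,
    hR.integral_abs_rpow_eq (by linarith)]
  · simp only [mul_assoc]
    gcongr
  · exact (h₁.const_mul _).add (h₂.const_mul _)

end MeasureTheory

theorem zolotarev_r_two_three_perturbation_general
    {Ω : Type*} [MeasurableSpace Ω] (μ : Measure Ω)
    (r : ℝ) (hr2 : 2 < r)
    (S M R : Ω → ℝ)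
    (hSMR : ∀ ω, S ω = M ω + R ω)
    (hMr : MemLp M (ENNReal.ofReal r) μ)
    (hRr : MemLp R (ENNReal.ofReal r) μ)
    (g : ℝ → ℝ) (hg : Differentiable ℝ g) (hg' : Differentiable ℝ (deriv g))
    (h0 : deriv g 0 = 0) (h0' : deriv (deriv g) 0 = 0)
    (hHolder : ∀ x y : ℝ, |deriv (deriv g) x - deriv (deriv g) y| ≤ |x - y| ^ (r - 2)) :
    ∫ ω, (g (S ω) - g (M ω)) ∂μ
      ≤ (1 / (r - 1)) * (eLpNorm R (ENNReal.ofReal r) μ).toReal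
            * (eLpNorm M (ENNReal.ofReal r) μ).toReal ^ (r - 1)
        + (1 / 2) * (eLpNorm R (ENNReal.ofReal r) μ).toReal ^ 2
            * (eLpNorm M (ENNReal.ofReal r) μ).toReal ^ (r - 2)
        + (eLpNorm R (ENNReal.ofReal r) μ).toReal ^ r :=
  calc ∫ ω, (g (S ω) - g (M ω)) ∂μ ≤ ∫ ω, |g (S ω) - g (M ω)| ∂μ :=
        (le_abs_self _).trans abs_integral_le_integral_abs
    _ ≤ ∫ ω, taylorMajorant r (M ω) (R ω) ∂μ :=
        integral_mono_of_nonneg (ae_of_all _ fun ω => abs_nonneg _)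
          (integrable_taylorMajorant hr2 hMr hRr) (ae_of_all _ fun ω => by
            simpa only [hSMR] using
              abs_sub_le_taylorMajorant_of_holder hr2.le hg hg' h0 h0' hHolder (M ω) (R ω))
    _ ≤ _ := integral_taylorMajorant_le hr2 hMr hRr

theorem zolotarev_r_two_three_perturbation
    {Ω : Type*} [MeasurableSpace Ω] (μ : Measure Ω) [IsProbabilityMeasure μ]
    (r : ℝ) (hr2 : 2 < r) (hr3 : r ≤ 3)
    (S M R : Ω → ℝ) (hM : Measurable M) (hR : Measurable R)
    (hSMR : ∀ ω, S ω = M ω + R ω)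
    (hvar : ∫ ω, (S ω) ^ 2 ∂μ = ∫ ω, (M ω) ^ 2 ∂μ)
    (hR0 : ∫ ω, R ω ∂μ = 0)
    (hSr : MemLp S (ENNReal.ofReal r) μ)
    (hMr : MemLp M (ENNReal.ofReal r) μ)
    (hRr : MemLp R (ENNReal.ofReal r) μ)
    (g : ℝ → ℝ) (hg : Differentiable ℝ g) (hg' : Differentiable ℝ (deriv g))
    (h0 : deriv g 0 = 0) (h0' : deriv (deriv g) 0 = 0)
    (hHolder : ∀ x y : ℝ, |deriv (deriv g) x - deriv (deriv g) y| ≤ |x - y| ^ (r - 2)) :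
    ∫ ω, (g (S ω) - g (M ω)) ∂μ
      ≤ (1 / (r - 1)) * (eLpNorm R (ENNReal.ofReal r) μ).toReal
            * (eLpNorm M (ENNReal.ofReal r) μ).toReal ^ (r - 1)
        + (1 / 2) * (eLpNorm R (ENNReal.ofReal r) μ).toReal ^ 2
            * (eLpNorm M (ENNReal.ofReal r) μ).toReal ^ (r - 2)
        + (eLpNorm R (ENNReal.ofReal r) μ).toReal ^ r :=
  zolotarev_r_two_three_perturbation_general μ r hr2 S M R hSMR hMr hRr g hg hg' h0 h0' hHolder
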